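/- With notation as above, let W_m be the unique shuffle of W_a and W_c matching ac(ā*ac̄*c)*. The restriction of W_m to the letters {ā, c̄} is a balanced parenthesis word (ā opening, c̄ closing) if and only if for every k with 1 ≤ k ≤ p, the number of ā's to the left of the k-th occurrence of a in W_a is at least the number of c̄'s to the left of the k-th occurrence of c in W_c. -/

import Mathlib

/-- The alphabet `{a, ā, c, c̄}`. -/
inductive Letter : Type
  | a | abar | c | cbar
  deriving DecidableEq

/-- `IsShuffle u v w` : `w` is a shuffle of `u` and `v`. -/
inductive IsShuffle {α : Type*} : List α → List α → List α → Prop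
  | nil : IsShuffle [] [] []
  | left {u v w} (x : α) : IsShuffle u v w → IsShuffle (x :: u) v (x :: w)
  | right {u v w} (y : α) : IsShuffle u v w → IsShuffle u (y :: v) (y :: w)

/-- Words matching `(ā* a c̄* c)*`. -/
inductive Blocks : List Letter → Prop
  | nil : Blocks []
  | cons (r s : ℕ) (t : List Letter) : Blocks t →
      Blocks (List.replicate r Letter.abar ++ [Letter.a] ++
        List.replicate s Letter.cbar ++ [Letter.c] ++ t)

/-- Words matching the regular expression `a c (ā* a c̄* c)*`. -/
def Matches (w : List Letter) : Prop :=
  ∃ t, Blocks t ∧ w = Letter.a :: Letter.c :: t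

/-- The prefix of a word consisting of the letters strictly before the
`k`-th occurrence of `y` (1-indexed). -/
def takeUntilNth {α : Type*} [DecidableEq α] (y : α) : ℕ → List α → List α
  | _, [] => []
  | k, z :: t =>
    if z = y then (if k ≤ 1 then [] else z :: takeUntilNth y (k-1) t)
    else z :: takeUntilNth y k t

/-!
Since `W_a` and `W_c` live on disjoint alphabets, they are the restrictions of `W_m` to
`{a, ā}` and `{c, c̄}`. Writing `W_m = ∏ᵢ āʳⁱ a c̄ˢⁱ c` (the leading `a c` being the block
`r = s = 0`), we get `W_a = ∏ᵢ āʳⁱ a`, `W_c = ∏ᵢ c̄ˢⁱ c`, and the `{ā, c̄}`-restriction is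
`∏ᵢ āʳⁱ c̄ˢⁱ`. The numbers of `ā`'s and `c̄`'s before the `k`-th `a`, resp. `c`, are the partial
sums `r₁ + ⋯ + rₖ` and `s₁ + ⋯ + sₖ`. Along `∏ᵢ āʳⁱ c̄ˢⁱ` the excess of `c̄` over `ā` only grows
inside a `c̄`-run, so it is largest at the end of a block: the prefix condition of a balanced
word is exactly the inequality of these partial sums, and the totals agree since both are `q`.
-/

open List

section Shuffle

variable {α : Type*} {u v w : List α}

theorem IsShuffle.swap (h : IsShuffle u v w) : IsShuffle v u w := by
  induction h with
  | nil => exact .nil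
  | left x _ ih => exact .right x ih
  | right y _ ih => exact .left y ih

theorem IsShuffle.filter_eq_left (P : α → Prop) [DecidablePred P] (h : IsShuffle u v w)
    (hu : ∀ x ∈ u, P x) (hv : ∀ y ∈ v, ¬ P y) : w.filter (fun x => P x) = u := by
  induction h with
  | nil => rfl
  | left x _ ih =>
    rw [filter_cons_of_pos (by simpa using hu x mem_cons_self),
      ih (fun x hx => hu x (mem_cons_of_mem _ hx)) hv]
  | right y _ ih =>
    rw [filter_cons_of_neg (by simpa using hv y mem_cons_self),
      ih hu (fun y hy => hv y (mem_cons_of_mem _ hy))]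

theorem IsShuffle.filter_eq_right (P : α → Prop) [DecidablePred P] (h : IsShuffle u v w)
    (hu : ∀ x ∈ u, ¬ P x) (hv : ∀ y ∈ v, P y) : w.filter (fun x => P x) = v :=
  h.swap.filter_eq_left P hv hu

end Shuffle

section Runs

variable {α : Type*}

def terminatedRuns (x y : α) (ns : List ℕ) : List α :=
  ns.flatMap fun n => replicate n y ++ [x]

def parenWord (o c : α) (L : List (ℕ × ℕ)) : List α :=
  L.flatMap fun rs => replicate rs.1 o ++ replicate rs.2 c

theorem parenWord_cons (o c : α) (r s : ℕ) (L : List (ℕ × ℕ)) :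
    parenWord o c ((r, s) :: L) = replicate r o ++ (replicate s c ++ parenWord o c L) := by
  simp [parenWord]

theorem parenWord_append (o c : α) (L L' : List (ℕ × ℕ)) :
    parenWord o c (L ++ L') = parenWord o c L ++ parenWord o c L' :=
  flatMap_append

variable [DecidableEq α] {x y o c : α}

theorem takeUntilNth_append_of_notMem {l : List α} (hl : y ∉ l) (k : ℕ) (u : List α) :
    takeUntilNth y k (l ++ u) = l ++ takeUntilNth y k u := by
  induction l with
  | nil => rfl
  | cons z l ih =>
    rw [mem_cons, not_or] at hl
    simp only [cons_append, takeUntilNth, if_neg (Ne.symm hl.1), ih hl.2]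

theorem count_terminatedRuns_left (h : y ≠ x) (ns : List ℕ) :
    (terminatedRuns x y ns).count x = ns.length := by
  simp [terminatedRuns, count_flatMap, count_replicate, h, Function.comp_def]

theorem count_terminatedRuns_right (h : x ≠ y) (ns : List ℕ) :
    (terminatedRuns x y ns).count y = ns.sum := by
  simp [terminatedRuns, count_flatMap, h, Function.comp_def]

theorem count_takeUntilNth_terminatedRuns (h : x ≠ y) (ns : List ℕ) {k : ℕ} (hk : 1 ≤ k) :
    (takeUntilNth x k (terminatedRuns x y ns)).count y = (ns.take k).sum := by
  induction ns generalizing k with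
  | nil => simp [terminatedRuns, takeUntilNth]
  | cons n ns ih =>
    have hx : x ∉ replicate n y := fun hm => h (eq_of_mem_replicate hm)
    have hrun : terminatedRuns x y (n :: ns) = replicate n y ++ x :: terminatedRuns x y ns := by
      simp [terminatedRuns]
    rw [hrun, takeUntilNth_append_of_notMem hx]
    obtain rfl | ⟨k, rfl⟩ : k = 1 ∨ ∃ k', k = k' + 2 := by
      rcases k with _ | _ | k <;> simp_all
    · simp [takeUntilNth]
    · simp [takeUntilNth, h, ih (Nat.le_add_left 1 k)]

theorem count_parenWord_left (h : c ≠ o) (L : List (ℕ × ℕ)) :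
    (parenWord o c L).count o = (L.map Prod.fst).sum := by
  simp [parenWord, count_flatMap, count_replicate, h, Function.comp_def]

theorem count_parenWord_right (h : o ≠ c) (L : List (ℕ × ℕ)) :
    (parenWord o c L).count c = (L.map Prod.snd).sum := by
  simp [parenWord, count_flatMap, count_replicate, h, Function.comp_def]

theorem le_count_take_parenWord_add (h : o ≠ c) {L : List (ℕ × ℕ)} {a₀ c₀ : ℕ}
    (hL : ∀ j ≤ L.length,
      c₀ + ((L.take j).map Prod.snd).sum ≤ a₀ + ((L.take j).map Prod.fst).sum) (t : ℕ) :
    c₀ + ((parenWord o c L).take t).count c ≤ a₀ + ((parenWord o c L).take t).count o := by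
  induction L generalizing a₀ c₀ t with
  | nil => simpa [parenWord] using hL 0
  | cons rs L ih =>
    obtain ⟨r, s⟩ := rs
    have h₀ : c₀ ≤ a₀ := by simpa using hL 0
    have h₁ : c₀ + s ≤ a₀ + r := by simpa using hL 1
    have ih' := ih (a₀ := a₀ + r) (c₀ := c₀ + s)
      (fun j hj => by simpa [add_assoc] using hL (j + 1) (by simpa using hj)) (t - r - s)
    rw [parenWord_cons]
    simp only [take_append, count_append, take_replicate, count_replicate, length_replicate,
      beq_iff_eq, if_pos, h, h.symm, if_false]
    rcases le_or_gt t (r + s) with hts | hts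
    · rw [show t - r - s = 0 by omega] at ih' ⊢
      simp only [take_zero, count_nil] at ih' ⊢
      omega
    · omega

theorem count_take_parenWord_le_iff (h : o ≠ c) (L : List (ℕ × ℕ)) :
    (∀ t, ((parenWord o c L).take t).count c ≤ ((parenWord o c L).take t).count o) ↔
      ∀ j ≤ L.length, ((L.take j).map Prod.snd).sum ≤ ((L.take j).map Prod.fst).sum := by
  refine ⟨fun hW j _ => ?_, fun hL t => ?_⟩
  · have hsplit : parenWord o c L = parenWord o c (L.take j) ++ parenWord o c (L.drop j) := by
      rw [← parenWord_append, take_append_drop]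
    simpa [hsplit, take_left, count_parenWord_left h.symm, count_parenWord_right h] using
      hW (parenWord o c (L.take j)).length
  · simpa using le_count_take_parenWord_add h (a₀ := 0) (c₀ := 0) (by simpa using hL) t

end Runs

def blockWord (L : List (ℕ × ℕ)) : List Letter :=
  L.flatMap fun rs =>
    replicate rs.1 Letter.abar ++ [Letter.a] ++ replicate rs.2 Letter.cbar ++ [Letter.c]

theorem Blocks.exists_eq_blockWord {w : List Letter} (h : Blocks w) : ∃ L, w = blockWord L := by
  induction h with
  | nil => exact ⟨[], rfl⟩
  | cons r s _ _ ih =>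
    obtain ⟨L, rfl⟩ := ih
    exact ⟨(r, s) :: L, by simp [blockWord]⟩

theorem Matches.exists_eq_blockWord {w : List Letter} (h : Matches w) :
    ∃ L, w = blockWord L := by
  obtain ⟨t, ht, rfl⟩ := h
  obtain ⟨L, rfl⟩ := ht.exists_eq_blockWord
  exact ⟨(0, 0) :: L, by simp [blockWord]⟩

theorem filter_blockWord_a (L : List (ℕ × ℕ)) :
    (blockWord L).filter (fun l => l = Letter.a ∨ l = Letter.abar) =
      terminatedRuns Letter.a Letter.abar (L.map Prod.fst) := by
  simp [blockWord, terminatedRuns, filter_flatMap, flatMap_map]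

theorem filter_blockWord_c (L : List (ℕ × ℕ)) :
    (blockWord L).filter (fun l => l = Letter.c ∨ l = Letter.cbar) =
      terminatedRuns Letter.c Letter.cbar (L.map Prod.snd) := by
  simp [blockWord, terminatedRuns, filter_flatMap, flatMap_map]

theorem filter_blockWord_bar (L : List (ℕ × ℕ)) :
    (blockWord L).filter (fun l => l = Letter.abar ∨ l = Letter.cbar) =
      parenWord Letter.abar Letter.cbar L := by
  simp [blockWord, parenWord, filter_flatMap]

theorem matching_word_balanced_iff_general (p q : ℕ) (Wa Wc Wm : List Letter)
    (haAlpha : ∀ l ∈ Wa, l = Letter.a ∨ l = Letter.abar)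
    (hcAlpha : ∀ l ∈ Wc, l = Letter.c ∨ l = Letter.cbar)
    (ha1 : Wa.count Letter.a = p) (ha2 : Wa.count Letter.abar = q)
    (hc2 : Wc.count Letter.cbar = q)
    (hshuffle : IsShuffle Wa Wc Wm) (hmatch : Matches Wm) :
    (((Wm.filter (fun l => l = Letter.abar ∨ l = Letter.cbar)).count Letter.abar =
        (Wm.filter (fun l => l = Letter.abar ∨ l = Letter.cbar)).count Letter.cbar) ∧
      (∀ t : ℕ,
        ((Wm.filter (fun l => l = Letter.abar ∨ l = Letter.cbar)).take t).count Letter.cbar ≤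
        ((Wm.filter (fun l => l = Letter.abar ∨ l = Letter.cbar)).take t).count Letter.abar))
      ↔
    (∀ k : ℕ, 1 ≤ k → k ≤ p →
      (takeUntilNth Letter.c k Wc).count Letter.cbar ≤
        (takeUntilNth Letter.a k Wa).count Letter.abar) := by
  obtain ⟨L, rfl⟩ := hmatch.exists_eq_blockWord
  have hWa : Wa = terminatedRuns Letter.a Letter.abar (L.map Prod.fst) := by
    rw [← hshuffle.filter_eq_left _ haAlpha
      (fun l hl => by rcases hcAlpha l hl with rfl | rfl <;> simp), filter_blockWord_a]
  have hWc : Wc = terminatedRuns Letter.c Letter.cbar (L.map Prod.snd) := by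
    rw [← hshuffle.filter_eq_right _
      (fun l hl => by rcases haAlpha l hl with rfl | rfl <;> simp) hcAlpha, filter_blockWord_c]
  have hp : p = L.length := by
    simpa [hWa, count_terminatedRuns_left] using ha1.symm
  have hq : (L.map Prod.fst).sum = (L.map Prod.snd).sum := by
    rw [hWa, count_terminatedRuns_right (by decide)] at ha2
    rw [hWc, count_terminatedRuns_right (by decide)] at hc2
    rw [ha2, hc2]
  have hprefix : ∀ k, 1 ≤ k →
      ((takeUntilNth Letter.c k Wc).count Letter.cbar ≤
        (takeUntilNth Letter.a k Wa).count Letter.abar ↔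
      ((L.take k).map Prod.snd).sum ≤ ((L.take k).map Prod.fst).sum) := by
    intro k hk
    rw [hWa, hWc, count_takeUntilNth_terminatedRuns (by decide) _ hk,
      count_takeUntilNth_terminatedRuns (by decide) _ hk, map_take, map_take]
  rw [filter_blockWord_bar, count_parenWord_left (by decide), count_parenWord_right (by decide),
    count_take_parenWord_le_iff (by decide), ← hp, and_iff_right hq]
  constructor
  · exact fun h k hk hkp => (hprefix k hk).2 (h k hkp)
  · intro h j hj
    rcases Nat.eq_zero_or_pos j with rfl | hj0
    · simp
    · exact (hprefix j hj0).1 (h j hj0 hj)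

/-- The restriction of the shuffle `W_m` (matching `a c (ā* a c̄* c)*`) to `{ā, c̄}`
is a balanced parenthesis word (`ā` opening, `c̄` closing) iff for every
`1 ≤ k ≤ p` the number of `ā`'s left of the `k`-th `a` in `W_a` is at least the
number of `c̄`'s left of the `k`-th `c` in `W_c`. -/
theorem matching_word_balanced_iff (p q : ℕ) (hp : 1 ≤ p) (Wa Wc Wm : List Letter)
    (haAlpha : ∀ l ∈ Wa, l = Letter.a ∨ l = Letter.abar)
    (hcAlpha : ∀ l ∈ Wc, l = Letter.c ∨ l = Letter.cbar)
    (ha1 : Wa.count Letter.a = p) (ha2 : Wa.count Letter.abar = q)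
    (hc1 : Wc.count Letter.c = p) (hc2 : Wc.count Letter.cbar = q)
    (hstarta : Wa.head? = some Letter.a) (hstartc : Wc.head? = some Letter.c)
    (hshuffle : IsShuffle Wa Wc Wm) (hmatch : Matches Wm) :
    (((Wm.filter (fun l => l = Letter.abar ∨ l = Letter.cbar)).count Letter.abar =
        (Wm.filter (fun l => l = Letter.abar ∨ l = Letter.cbar)).count Letter.cbar) ∧
      (∀ t : ℕ,
        ((Wm.filter (fun l => l = Letter.abar ∨ l = Letter.cbar)).take t).count Letter.cbar ≤
        ((Wm.filter (fun l => l = Letter.abar ∨ l = Letter.cbar)).take t).count Letter.abar))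
      ↔
    (∀ k : ℕ, 1 ≤ k → k ≤ p →
      (takeUntilNth Letter.c k Wc).count Letter.cbar ≤
        (takeUntilNth Letter.a k Wa).count Letter.abar) :=
  matching_word_balanced_iff_general p q Wa Wc Wm haAlpha hcAlpha ha1 ha2 hc2 hshuffle hmatch
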